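/- Let α, β, k be real numbers with α > −1, β > −1 and 0 < k < β + 1. For n ≥ 0 define the 2×2 real matrices A_n = [[ (β+n+2)(k+n)(α+β+n+2)/((k+n+1)(α+β+2n+2)(α+β+2n+3)), 0 ], [ k(β+n+2)/((α+β−k+n+3)(α+β+2n+3)(k+n+1)), (β+n+2)(α+β+n+3)(α+β−k+n+2)/((α+β+2n+3)(α+β+2n+4)(α+β−k+n+3)) ]] and L_n = [[ (n+k)(α+β+n+2)_n/(k·(β+2)_n), 0 ], [ −n(α+β+n+3)_n/((α+β−k+2)(β+2)_n), (α+β+n−k+2)(α+β+n+3)_n/((α+β−k+2)(β+2)_n) ]]. Then for every n ≥ 0, L_n · (A_0 A_1 ⋯ A_{n−1}) = I₂, where the product is taken in increasing order of indices and the empty product (n = 0) is I₂. In particular L_n = (A_0 ⋯ A_{n−1})^{−1}. -/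

import Mathlib

open Matrix

/-- Pochhammer symbol `(a)_n = a(a+1)⋯(a+n-1)`, with `(a)_0 = 1`. -/
noncomputable def poch (a : ℝ) (n : ℕ) : ℝ := ∏ j ∈ Finset.range n, (a + j)

/-- The superdiagonal blocks `A n` of the `d = 2` Jacobi-type example. -/
noncomputable def Amat (α β k : ℝ) (n : ℕ) : Matrix (Fin 2) (Fin 2) ℝ :=
  !![(β + (n : ℝ) + 2) * (k + (n : ℝ)) * (α + β + (n : ℝ) + 2) /
       ((k + (n : ℝ) + 1) * (α + β + 2 * (n : ℝ) + 2) * (α + β + 2 * (n : ℝ) + 3)),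
     0;
     k * (β + (n : ℝ) + 2) /
       ((α + β - k + (n : ℝ) + 3) * (α + β + 2 * (n : ℝ) + 3) * (k + (n : ℝ) + 1)),
     (β + (n : ℝ) + 2) * (α + β + (n : ℝ) + 3) * (α + β - k + (n : ℝ) + 2) /
       ((α + β + 2 * (n : ℝ) + 3) * (α + β + 2 * (n : ℝ) + 4) *
         (α + β - k + (n : ℝ) + 3))]

/-- The matrix `L n = (A 0 ⋯ A (n-1))⁻¹` of the `d = 2` Jacobi-type example. -/
noncomputable def Lmat (α β k : ℝ) (n : ℕ) : Matrix (Fin 2) (Fin 2) ℝ :=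
  !![((n : ℝ) + k) * poch (α + β + (n : ℝ) + 2) n / (k * poch (β + 2) n), 0;
     -((n : ℝ) * poch (α + β + (n : ℝ) + 3) n) /
       ((α + β - k + 2) * poch (β + 2) n),
     (α + β + (n : ℝ) - k + 2) * poch (α + β + (n : ℝ) + 3) n /
       ((α + β - k + 2) * poch (β + 2) n)]

/-! The one-step relation `A n * L (n + 1) = L n` telescopes from `L 0 = 1` to
`A 0 ⋯ A (n - 1) * L n = 1`. It is a rational identity entrywise once the Pochhammer symbols of
`L n` and `L (n + 1)` are all expressed through `(α + β + n + 3)_n` and `(β + 2)_n`, using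
`(a)_n (a + n) = a (a + 1)_n`. -/

lemma poch_succ_right (a : ℝ) (n : ℕ) : poch a (n + 1) = poch a n * (a + n) := by
  simp [poch, Finset.prod_range_succ]

lemma poch_succ_left (a : ℝ) (n : ℕ) : poch a (n + 1) = a * poch (a + 1) n := by
  simp only [poch, Finset.prod_range_succ', Nat.cast_zero, add_zero, Nat.cast_succ, add_assoc,
    add_comm (1 : ℝ)]
  ring

lemma poch_mul_add (a : ℝ) (n : ℕ) : poch a n * (a + n) = a * poch (a + 1) n := by
  rw [← poch_succ_right, poch_succ_left]

lemma poch_pos {a : ℝ} (ha : 0 < a) (n : ℕ) : 0 < poch a n :=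
  Finset.prod_pos fun j _ => by positivity

lemma List.prod_map_range_mul_of_mul_succ {M : Type*} [Monoid M] {A L : ℕ → M}
    (h : ∀ n, A n * L (n + 1) = L n) (n : ℕ) :
    ((List.range n).map A).prod * L n = L 0 := by
  induction n with
  | zero => simp
  | succ n ih => rw [List.range_succ, List.map_append, List.prod_append, List.map_singleton,
      List.prod_singleton, mul_assoc, h, ih]

lemma Lmat_zero {α β k : ℝ} (hk : k ≠ 0) (hc : α + β - k + 2 ≠ 0) :
    Lmat α β k 0 = 1 := by
  rw [Lmat, Matrix.one_fin_two]
  simp [poch, hk, hc]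

lemma Amat_mul_Lmat_succ {α β k : ℝ} (hα : α > -1) (hk : 0 < k) (hkβ : k < β + 1)
    (n : ℕ) : Amat α β k n * Lmat α β k (n + 1) = Lmat α β k n := by
  have hn : (0 : ℝ) ≤ n := n.cast_nonneg
  have hQ : 0 < poch (β + 2) n := poch_pos (by linarith) n
  have hP_lo : poch (α + β + n + 2) n =
      (α + β + n + 2) * poch (α + β + n + 3) n / (α + β + 2 * n + 2) := by
    have h := poch_mul_add (α + β + n + 2) n
    rw [show α + β + n + 2 + 1 = α + β + n + 3 by ring] at h
    rw [eq_div_iff (by linarith)]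
    linear_combination h
  have hP_succ : poch (α + β + (n + 1) + 2) (n + 1) =
      poch (α + β + n + 3) n * (α + β + 2 * n + 3) := by
    rw [show α + β + (n + 1) + 2 = α + β + n + 3 by ring, poch_succ_right]
    ring
  have hP_hi : poch (α + β + (n + 1) + 3) (n + 1) =
      poch (α + β + n + 3) n * (α + β + 2 * n + 3) * (α + β + 2 * n + 4) /
        (α + β + n + 3) := by
    have h := poch_mul_add (α + β + n + 3) n
    rw [show α + β + n + 3 + 1 = α + β + n + 4 by ring] at h
    rw [show α + β + (n + 1) + 3 = α + β + n + 4 by ring, poch_succ_right,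
      eq_div_iff (by linarith)]
    linear_combination (-(α + β + 2 * n + 4)) * h
  have hQ_succ : poch (β + 2) (n + 1) = poch (β + 2) n * (β + n + 2) := by
    rw [poch_succ_right]; ring
  have := hk.ne'
  have := hQ.ne'
  have : k + n + 1 ≠ 0 := by linarith
  -- written as `field_simp` normalizes the denominators of `Amat`, so that it finds them
  have : α + β + n * 2 + 2 ≠ 0 := by linarith
  have : α + β + n * 2 + 3 ≠ 0 := by linarith
  have : α + β + n * 2 + 4 ≠ 0 := by linarith
  have : α + β + n + 3 ≠ 0 := by linarith
  have : α + β - k + n + 3 ≠ 0 := by linarith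
  have : α + β - k + 2 ≠ 0 := by linarith
  have : β + n + 2 ≠ 0 := by linarith
  simp only [Amat, Lmat, Nat.cast_succ, hP_lo, hP_succ, hP_hi, hQ_succ]
  ext i j
  fin_cases i <;> fin_cases j <;>
    simp only [Fin.zero_eta, Fin.mk_one, Fin.isValue, Matrix.mul_apply, Fin.sum_univ_two,
      of_apply, cons_val', cons_val_fin_one, cons_val_zero, cons_val_one, mul_zero, zero_mul,
      add_zero] <;>
    field_simp <;> ring

theorem stmt_10_general (α β k : ℝ) (hα : α > -1)
    (hk : 0 < k) (hkβ : k < β + 1) :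
    ∀ n : ℕ,
      Lmat α β k n * ((List.range n).map (Amat α β k)).prod = 1 ∧
      Lmat α β k n = (((List.range n).map (Amat α β k)).prod)⁻¹ := by
  intro n
  have hright : ((List.range n).map (Amat α β k)).prod * Lmat α β k n = 1 := by
    rw [List.prod_map_range_mul_of_mul_succ (Amat_mul_Lmat_succ hα hk hkβ),
      Lmat_zero hk.ne' (by linarith)]
  have hleft := mul_eq_one_comm.mp hright
  exact ⟨hleft, (Matrix.inv_eq_left_inv hleft).symm⟩

/-- `L n` is the inverse of the ordered product `A 0 ⋯ A (n-1)`. -/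
theorem stmt_10 (α β k : ℝ) (hα : α > -1) (hβ : β > -1)
    (hk : 0 < k) (hkβ : k < β + 1) :
    ∀ n : ℕ,
      Lmat α β k n * ((List.range n).map (Amat α β k)).prod = 1 ∧
      Lmat α β k n = (((List.range n).map (Amat α β k)).prod)⁻¹ :=
  stmt_10_general α β k hα hk hkβ
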